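/- arXiv:2208.04320 — 2 statements merged into one kernel-verified Lean document; each statement's English description precedes it below -/
import Mathlib

section
/- Let Λ be a finite nonempty type, d ≥ 1, B : Λ → Λ → Matrix (Fin d) (Fin d) ℂ with ∑_{i∈Λ} (B_j^i)ᴴ * B_j^i = 1 for every j, and let ρ : Λ → Matrix (Fin d) (Fin d) ℂ be such that every ρ_i is positive semidefinite and ∑_{i∈Λ} Tr(ρ_i) = 1. For a path (i_0, i_1, …, i_n) ∈ Λ^{n+1} set ℙ_ρ(i_0,…,i_n) := Tr(B_{i_{n-1}}^{i_n} ⋯ B_{i_1}^{i_2} B_{i_0}^{i_1} ρ_{i_0} (B_{i_0}^{i_1})ᴴ (B_{i_1}^{i_2})ᴴ ⋯ (B_{i_{n-1}}^{i_n})ᴴ). Then for every n: (a) each ℙ_ρ(i_0,…,i_n) is a nonnegative real number, and (b) ∑_{(i_0,…,i_n)∈Λ^{n+1}} ℙ_ρ(i_0,…,i_n) = 1; i.e., ℙ_ρ is a probability distribution on paths of length n. -/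
open Matrix Kronecker
open scoped ComplexOrder

/-- `pathOp B n is = B_{i_{n-1}}^{i_n} ⋯ B_{i_1}^{i_2} B_{i_0}^{i_1}`, the ordered product
of transition operators along the path `is = (i_0, …, i_n)`. -/
noncomputable def pathOp {Λ : Type*} {d : ℕ} (B : Λ → Λ → Matrix (Fin d) (Fin d) ℂ) :
    (n : ℕ) → (Fin (n + 1) → Λ) → Matrix (Fin d) (Fin d) ℂ
  | 0, _ => 1
  | n + 1, is =>
      B (is ⟨n, by omega⟩) (is ⟨n + 1, by omega⟩) * pathOp B n (fun m => is m.castSucc)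

/-!
Positivity is immediate: each path weight is the trace of the congruence `P ρ_{i_0} Pᴴ` of a
positive semidefinite matrix. For the normalisation, extending a path by a last site `i` multiplies
its operator on the left by `B_j^i`, where `j` is the current last site; summing over `i` and
cycling the trace, `∑ᵢ Tr(B_j^i X (B_j^i)ᴴ) = Tr((∑ᵢ (B_j^i)ᴴ B_j^i) X) = Tr X`. So the total
weight of paths of length `n + 1` equals that of paths of length `n`, and by induction it equals
`∑ᵢ Tr ρ_i = 1`.
-/

theorem Matrix.sum_trace_mul_mul_conjTranspose_of_sum_conjTranspose_mul_eq_one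
    {ι m R : Type*} [Fintype ι] [Fintype m] [DecidableEq m] [CommRing R] [StarRing R]
    {K : ι → Matrix m m R} (hK : ∑ i, (K i)ᴴ * K i = 1) (X : Matrix m m R) :
    ∑ i, (K i * X * (K i)ᴴ).trace = X.trace := by
  calc ∑ i, (K i * X * (K i)ᴴ).trace
      = ∑ i, ((K i)ᴴ * K i * X).trace := by
        refine Finset.sum_congr rfl fun i _ => ?_
        rw [trace_mul_cycle, mul_assoc]
    _ = X.trace := by rw [← trace_sum, ← Finset.sum_mul, hK, one_mul]

section pathOp

variable {Λ : Type*} {d : ℕ} (B : Λ → Λ → Matrix (Fin d) (Fin d) ℂ)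

theorem pathOp_zero (is : Fin 1 → Λ) : pathOp B 0 is = 1 := rfl

theorem pathOp_snoc (n : ℕ) (is : Fin (n + 1) → Λ) (i : Λ) :
    pathOp B (n + 1) (Fin.snoc is i) = B (is (Fin.last n)) i * pathOp B n is := by
  have h_last : (Fin.snoc is i : Fin (n + 2) → Λ) ⟨n, by omega⟩ = is (Fin.last n) :=
    Fin.snoc_castSucc (α := fun _ => Λ) (i := Fin.last n) ..
  have h_init : (fun m : Fin (n + 1) => (Fin.snoc is i : Fin (n + 2) → Λ) m.castSucc) = is :=
    funext fun m => Fin.snoc_castSucc (α := fun _ => Λ) ..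
  have h_new : (Fin.snoc is i : Fin (n + 2) → Λ) ⟨n + 1, by omega⟩ = i :=
    Fin.snoc_last (α := fun _ => Λ) ..
  rw [pathOp, h_last, h_new, h_init]

theorem sum_trace_pathOp_mul_mul_conjTranspose [Fintype Λ]
    (hB : ∀ j, ∑ i, (B j i)ᴴ * B j i = 1) (σ : Λ → Matrix (Fin d) (Fin d) ℂ) (n : ℕ) :
    ∑ is : Fin (n + 1) → Λ, (pathOp B n is * σ (is 0) * (pathOp B n is)ᴴ).trace =
      ∑ i, (σ i).trace := by
  induction n with
  | zero =>
    refine Fintype.sum_equiv (Equiv.funUnique (Fin 1) Λ) _ _ fun is => ?_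
    simp [pathOp_zero]
  | succ n ih =>
    rw [← ih, ← (Fin.snocEquiv fun _ => Λ).sum_comp, Fintype.sum_prod_type_right]
    refine Finset.sum_congr rfl fun is _ => ?_
    have h_first (i : Λ) : (Fin.snoc is i : Fin (n + 2) → Λ) 0 = is 0 :=
      Fin.snoc_castSucc (α := fun _ => Λ) (i := 0) ..
    have h_snoc (i : Λ) : (Fin.snocEquiv fun _ => Λ) (i, is) = Fin.snoc is i := rfl
    simp only [h_snoc, h_first, pathOp_snoc, conjTranspose_mul]
    simpa only [mul_assoc] using
      sum_trace_mul_mul_conjTranspose_of_sum_conjTranspose_mul_eq_one (hB (is (Fin.last n)))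
        (pathOp B n is * σ (is 0) * (pathOp B n is)ᴴ)

end pathOp

theorem stmt_2_general {Λ : Type*} [Fintype Λ] {d : ℕ}
    (B : Λ → Λ → Matrix (Fin d) (Fin d) ℂ)
    (hB : ∀ j : Λ, ∑ i : Λ, (B j i)ᴴ * B j i = 1)
    (ρ : Λ → Matrix (Fin d) (Fin d) ℂ)
    (hρ : ∀ i, (ρ i).PosSemidef) (hTrρ : ∑ i : Λ, (ρ i).trace = 1) (n : ℕ) :
    (∀ is : Fin (n + 1) → Λ,
        0 ≤ (pathOp B n is * ρ (is 0) * (pathOp B n is)ᴴ).trace) ∧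
    ∑ is : Fin (n + 1) → Λ,
        (pathOp B n is * ρ (is 0) * (pathOp B n is)ᴴ).trace = 1 :=
  ⟨fun is => ((hρ (is 0)).mul_mul_conjTranspose_same (pathOp B n is)).trace_nonneg,
    (sum_trace_pathOp_mul_mul_conjTranspose B hB ρ n).trans hTrρ⟩

/-- `ℙ_ρ(i_0,…,i_n) = Tr(B_{i_{n-1}}^{i_n} ⋯ B_{i_0}^{i_1} ρ_{i_0}
(B_{i_0}^{i_1})ᴴ ⋯ (B_{i_{n-1}}^{i_n})ᴴ)` is a probability distribution on paths:
each value is a nonnegative real (i.e. `0 ≤ ·` in the complex order) and the values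
sum to `1` over all paths of length `n`. -/
theorem stmt_2 {Λ : Type*} [Fintype Λ] [DecidableEq Λ] [Nonempty Λ] {d : ℕ} (hd : 1 ≤ d)
    (B : Λ → Λ → Matrix (Fin d) (Fin d) ℂ)
    (hB : ∀ j : Λ, ∑ i : Λ, (B j i)ᴴ * B j i = 1)
    (ρ : Λ → Matrix (Fin d) (Fin d) ℂ)
    (hρ : ∀ i, (ρ i).PosSemidef) (hTrρ : ∑ i : Λ, (ρ i).trace = 1) (n : ℕ) :
    (∀ is : Fin (n + 1) → Λ,
        0 ≤ (pathOp B n is * ρ (is 0) * (pathOp B n is)ᴴ).trace) ∧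
    ∑ is : Fin (n + 1) → Λ,
        (pathOp B n is * ρ (is 0) * (pathOp B n is)ᴴ).trace = 1 :=
  stmt_2_general B hB ρ hρ hTrρ n
end

section
/- Let Λ be a finite nonempty type, d ≥ 1, B : Λ → Λ → Matrix (Fin d) (Fin d) ℂ with ∑_{i∈Λ} (B_j^i)ᴴ * B_j^i = 1 for every j, and ρ : Λ → Matrix (Fin d) (Fin d) ℂ with each ρ_j positive semidefinite and Tr(ρ_j) a positive real. Set M_j^i := B_j^i ⊗ₖ E_{ij} and φ_{jj'}(b) := ((Tr ρ_j)^{1/2} (Tr ρ_{j'})^{1/2})⁻¹ · Tr(((ρ_j^{1/2} * ρ_{j'}^{1/2}) ⊗ₖ E_{j' j}) * b). Then for every k ≥ 1, the transition expectation formula is unital: ∑_{i,j,j'∈Λ} (φ_{jj'}(1))^k • ((M_j^i)ᴴ * M_{j'}^i) = 1. -/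
open Matrix Kronecker
open scoped ComplexOrder

/-!
Since `ρ_j^{1/2} ρ_j^{1/2} = ρ_j`, the value `φ_{jj'}(1)` is the Kronecker delta `δ_{jj'}`, so for
`k ≥ 1` only the terms `j = j'` survive. As `(M_j^i)ᴴ M_j^i = (B_j^i)ᴴ B_j^i ⊗ₖ E_{jj}`, summing over
`i` gives `1 ⊗ₖ E_{jj}`, and summing over `j` gives `1 ⊗ₖ 1 = 1`.
-/

noncomputable def Matrix.PosSemidef.sqrt {n 𝕜 : Type*} [Fintype n] [DecidableEq n] [RCLike 𝕜]
    {A : Matrix n n 𝕜} (hA : A.PosSemidef) : Matrix n n 𝕜 :=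
  hA.1.eigenvectorUnitary.1 * diagonal ((↑) ∘ (√·) ∘ hA.1.eigenvalues) *
    (star hA.1.eigenvectorUnitary : Matrix n n 𝕜)

/-- The functional `φ_{jj'}(b) = ((Tr ρ_j)^{1/2}(Tr ρ_{j'})^{1/2})⁻¹
Tr((ρ_j^{1/2} ρ_{j'}^{1/2} ⊗ₖ E_{j'j}) b)`. -/
noncomputable def phiJJ {Λ : Type*} [Fintype Λ] [DecidableEq Λ] {d : ℕ}
    (ρ : Λ → Matrix (Fin d) (Fin d) ℂ) (hρ : ∀ j, (ρ j).PosSemidef) (j j' : Λ)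
    (b : Matrix (Fin d × Λ) (Fin d × Λ) ℂ) : ℂ :=
  ((Real.sqrt (ρ j).trace.re * Real.sqrt (ρ j').trace.re : ℝ) : ℂ)⁻¹ *
    ((((hρ j).sqrt * (hρ j').sqrt) ⊗ₖ single j' j (1 : ℂ)) * b).trace

/-- The dilated operator `M_j^i = B_j^i ⊗ₖ E_{ij}`. -/
noncomputable def Mop {Λ : Type*} [Fintype Λ] [DecidableEq Λ] {d : ℕ}
    (B : Λ → Λ → Matrix (Fin d) (Fin d) ℂ) (j i : Λ) :
    Matrix (Fin d × Λ) (Fin d × Λ) ℂ :=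
  B j i ⊗ₖ single i j (1 : ℂ)

theorem Matrix.PosSemidef.sqrt_mul_self {n 𝕜 : Type*} [Fintype n] [DecidableEq n] [RCLike 𝕜]
    {A : Matrix n n 𝕜} (hA : A.PosSemidef) : hA.sqrt * hA.sqrt = A := by
  conv_rhs => rw [hA.1.spectral_theorem, Unitary.conjStarAlgAut_apply]
  have hU : (star hA.1.eigenvectorUnitary : Matrix n n 𝕜) * hA.1.eigenvectorUnitary.1 = 1 :=
    Unitary.coe_star_mul_self _
  simp only [Matrix.PosSemidef.sqrt, Matrix.mul_assoc]
  rw [← Matrix.mul_assoc _ hA.1.eigenvectorUnitary.1, hU, Matrix.one_mul,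
    ← Matrix.mul_assoc (diagonal _), diagonal_mul_diagonal]
  congr 3
  funext i
  simp only [Function.comp_apply]
  rw [← RCLike.ofReal_mul, Real.mul_self_sqrt (hA.eigenvalues_nonneg i)]

namespace Matrix

variable {l m n p α : Type*} [NonUnitalNonAssocSemiring α]

theorem sum_kronecker (s : Finset l) (A : l → Matrix m n α) (C : Matrix p p α) :
    (∑ i ∈ s, A i) ⊗ₖ C = ∑ i ∈ s, A i ⊗ₖ C := by
  ext
  simp [Matrix.sum_apply, Finset.sum_mul]

theorem kronecker_sum (s : Finset l) (A : Matrix m n α) (C : l → Matrix p p α) :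
    A ⊗ₖ (∑ i ∈ s, C i) = ∑ i ∈ s, A ⊗ₖ C i := by
  ext
  simp [Matrix.sum_apply, Finset.mul_sum]

end Matrix

section

variable {Λ : Type*} [Fintype Λ] [DecidableEq Λ] {d : ℕ}

theorem phiJJ_one (ρ : Λ → Matrix (Fin d) (Fin d) ℂ) (hρ : ∀ j, (ρ j).PosSemidef)
    (hTr : ∀ j, 0 < (ρ j).trace) (j j' : Λ) :
    phiJJ ρ hρ j j' 1 = if j = j' then 1 else 0 := by
  rw [phiJJ, mul_one, trace_kronecker]
  split_ifs with h
  · subst h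
    obtain ⟨hre, him⟩ := Complex.pos_iff.mp (hTr j)
    have htrace : (((ρ j).trace.re : ℝ) : ℂ) = (ρ j).trace := Complex.ext rfl (by simp [him])
    rw [trace_single_eq_same, mul_one, (hρ j).sqrt_mul_self, Real.mul_self_sqrt hre.le, htrace]
    exact inv_mul_cancel₀ (hTr j).ne'
  · simp [trace_single_eq_of_ne j' j (1 : ℂ) (Ne.symm h)]

theorem conjTranspose_Mop_mul_Mop (B : Λ → Λ → Matrix (Fin d) (Fin d) ℂ) (i j j' : Λ) :
    (Mop B j i)ᴴ * Mop B j' i = ((B j i)ᴴ * B j' i) ⊗ₖ single j j' (1 : ℂ) := by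
  rw [Mop, Mop, conjTranspose_kronecker, conjTranspose_single, ← mul_kronecker_mul,
    single_mul_single_same, star_one, mul_one]

theorem sum_conjTranspose_Mop_mul_Mop (B : Λ → Λ → Matrix (Fin d) (Fin d) ℂ) (j : Λ)
    (hB : ∑ i : Λ, (B j i)ᴴ * B j i = 1) :
    ∑ i : Λ, (Mop B j i)ᴴ * Mop B j i = (1 : Matrix (Fin d) (Fin d) ℂ) ⊗ₖ single j j (1 : ℂ) := by
  simp only [conjTranspose_Mop_mul_Mop, ← sum_kronecker, hB]

end

theorem stmt_8_general {Λ : Type*} [Fintype Λ] [DecidableEq Λ] {d : ℕ}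
    (B : Λ → Λ → Matrix (Fin d) (Fin d) ℂ)
    (hB : ∀ j : Λ, ∑ i : Λ, (B j i)ᴴ * B j i = 1)
    (ρ : Λ → Matrix (Fin d) (Fin d) ℂ) (hρ : ∀ j, (ρ j).PosSemidef)
    (hTr : ∀ j, 0 < (ρ j).trace) (k : ℕ) (hk : 1 ≤ k) :
    ∑ i : Λ, ∑ j : Λ, ∑ j' : Λ,
        (phiJJ ρ hρ j j' 1) ^ k • ((Mop B j i)ᴴ * Mop B j' i) = 1 := by
  have hk0 : k ≠ 0 := Nat.one_le_iff_ne_zero.mp hk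
  calc ∑ i : Λ, ∑ j : Λ, ∑ j' : Λ, (phiJJ ρ hρ j j' 1) ^ k • ((Mop B j i)ᴴ * Mop B j' i)
      = ∑ i : Λ, ∑ j : Λ, (Mop B j i)ᴴ * Mop B j i := by
        simp [phiJJ_one ρ hρ hTr, ite_pow, zero_pow hk0]
    _ = ∑ j : Λ, ∑ i : Λ, (Mop B j i)ᴴ * Mop B j i := Finset.sum_comm
    _ = ∑ j : Λ, (1 : Matrix (Fin d) (Fin d) ℂ) ⊗ₖ single j j (1 : ℂ) :=
        Finset.sum_congr rfl fun j _ => sum_conjTranspose_Mop_mul_Mop B j (hB j)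
    _ = 1 := by rw [← kronecker_sum, sum_single_one, one_kronecker_one]

/-- the transition expectation of the QMC on the Cayley tree of order `k`
is unital: `∑ i j j', (φ_{jj'}(1))^k • ((M_j^i)ᴴ * M_{j'}^i) = 1`. -/
theorem stmt_8 {Λ : Type*} [Fintype Λ] [DecidableEq Λ] [Nonempty Λ] {d : ℕ} (hd : 1 ≤ d)
    (B : Λ → Λ → Matrix (Fin d) (Fin d) ℂ)
    (hB : ∀ j : Λ, ∑ i : Λ, (B j i)ᴴ * B j i = 1)
    (ρ : Λ → Matrix (Fin d) (Fin d) ℂ) (hρ : ∀ j, (ρ j).PosSemidef)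
    (hTr : ∀ j, 0 < (ρ j).trace) (k : ℕ) (hk : 1 ≤ k) :
    ∑ i : Λ, ∑ j : Λ, ∑ j' : Λ,
        (phiJJ ρ hρ j j' 1) ^ k • ((Mop B j i)ᴴ * Mop B j' i) = 1 :=
  stmt_8_general B hB ρ hρ hTr k hk
end
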